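/- arXiv:1004.0035 — 6 statements merged into one kernel-verified Lean document; each statement's English description precedes it below -/
import Mathlib

section
/- Suppose an abelian subgroup G of SL_d(ℤ) contains an element g whose action on 𝕋^d is irreducible (equivalently, whose characteristic polynomial is irreducible over ℚ). Then there exist: (i) a number field K of degree d; (ii) a group isomorphism φ from G onto a subgroup of the unit group U_K; (iii) a rank-d lattice Γ contained in K ⊂ K⊗_ℚℝ that is invariant under the multiplication action of every φ(h), h ∈ G; and a linear isomorphism ψ: ℝ^d → K⊗_ℚℝ ≅ ℝ^d such that ψ(ℤ^d) = Γ and ψ^{−1}∘×_{φ(h)}∘ψ = h for all h ∈ G. -/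
open scoped BigOperators NumberField
open NumberField

noncomputable section

abbrev SLZ (d : ℕ) := Matrix.SpecialLinearGroup (Fin d) ℤ

def intLattice (d : ℕ) : AddSubgroup (EuclideanSpace ℝ (Fin d)) where
  carrier := {v | ∀ i, ∃ n : ℤ, v i = (n : ℝ)}
  zero_mem' := fun i => ⟨0, by simp⟩
  add_mem' := by
    intro a b ha hb i
    obtain ⟨n, hn⟩ := ha i
    obtain ⟨m, hm⟩ := hb i
    exact ⟨n + m, by push_cast [← hn, ← hm]; rfl⟩
  neg_mem' := by
    intro a ha i
    obtain ⟨n, hn⟩ := ha i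
    exact ⟨-n, by push_cast [← hn]; rfl⟩

def matVec {d : ℕ} (A : Matrix (Fin d) (Fin d) ℤ) (v : EuclideanSpace ℝ (Fin d)) :
    EuclideanSpace ℝ (Fin d) := WithLp.toLp 2 (fun i => ∑ j, (A i j : ℝ) * v j)

def IrreducibleMat {d : ℕ} (A : SLZ d) : Prop :=
  Irreducible (((A : Matrix (Fin d) (Fin d) ℤ).charpoly).map (Int.castRingHom ℚ))

def TotallyIrreducibleMat {d : ℕ} (A : SLZ d) : Prop :=
  ∀ n : ℕ, 0 < n → IrreducibleMat (A ^ n)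

/-- The conjugation data of Proposition 2.15: a number field `K` of degree `d`, an isomorphism
`φ` of `G` with a group of units of `K`, a `φ(G)`-invariant lattice `Γ` contained in
`K ⊂ K ⊗_ℚ ℝ ≅ ℝ^{r₁} × ℂ^{r₂}` (the identification being the canonical embedding), and a
linear conjugation `ψ` between the `G`-action on `ℝ^d` and the multiplication action of
`φ(G)` on `K ⊗_ℚ ℝ`. -/
structure IrredConjData (d : ℕ) (G : Subgroup (SLZ d)) where
  K : Type
  [fieldK : Field K]
  [nfK : NumberField K]
  deg : Module.finrank ℚ K = d
  φ : ↥G →* (𝓞 K)ˣ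
  φinj : Function.Injective φ
  Γ : AddSubgroup (NumberField.mixedEmbedding.mixedSpace K)
  ΓinK : ∀ x ∈ Γ, ∃ t : K, NumberField.mixedEmbedding K t = x
  Γinv : ∀ (g : ↥G), ∀ x ∈ Γ,
    NumberField.mixedEmbedding K (algebraMap (𝓞 K) K ((φ g : (𝓞 K)ˣ) : 𝓞 K)) * x ∈ Γ
  ψ : EuclideanSpace ℝ (Fin d) ≃ₗ[ℝ] NumberField.mixedEmbedding.mixedSpace K
  ψlat : ∀ v : EuclideanSpace ℝ (Fin d), ψ v ∈ Γ ↔ v ∈ intLattice d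
  conj : ∀ (g : ↥G) (v : EuclideanSpace ℝ (Fin d)),
    ψ.symm (NumberField.mixedEmbedding K (algebraMap (𝓞 K) K ((φ g : (𝓞 K)ˣ) : 𝓞 K)) * ψ v)
      = matVec ((g : SLZ d) : Matrix (Fin d) (Fin d) ℤ) v

/-!
Let `K = ℚ[X]/(χ_g) ≅ ℚ[g]`, a field of degree `d` since `χ_g` is irreducible. The orbit map
`t ↦ t·v` of any nonzero vector is an isomorphism `K ≃ ℚ^d` of `K`-modules, so in the
transported basis `K` acts on itself by the regular representation, whose commutant is `K`.
Hence every element of `G`, commuting with `g`, is multiplication by some element of `K`; it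
is integral (a root of its integer characteristic polynomial) and invertible, i.e. a unit of
`𝓞 K`. Extending scalars to `ℝ` through the mixed embedding gives `ψ`, and `Γ = ψ(ℤ^d)`.
-/

open Module Matrix WithLp

namespace Algebra

variable {R A S n : Type*} [CommRing R] [CommRing A] [CommRing S] [Algebra A S]
  [Fintype n] [DecidableEq n]

theorem leftMulMatrix_mulVec_equivFun (b : Basis n A S) (x y : S) :
    leftMulMatrix b x *ᵥ b.equivFun y = b.equivFun (x * y) :=
  leftMulMatrix_mulVec_repr b x y

theorem exists_leftMulMatrix_eq_of_commute (b : Basis n A S) {B : Matrix n n A}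
    (hB : ∀ t, Commute (leftMulMatrix b t) B) : ∃ s, leftMulMatrix b s = B := by
  set s := b.equivFun.symm (B *ᵥ b.equivFun 1)
  refine ⟨s, ext_iff_mulVec.mpr fun w => ?_⟩
  obtain ⟨t, rfl⟩ := b.equivFun.surjective w
  calc leftMulMatrix b s *ᵥ b.equivFun t = leftMulMatrix b t *ᵥ b.equivFun s := by
        rw [leftMulMatrix_mulVec_equivFun, leftMulMatrix_mulVec_equivFun, mul_comm]
    _ = B *ᵥ (leftMulMatrix b t *ᵥ b.equivFun 1) := by
        rw [LinearEquiv.apply_symm_apply, mulVec_mulVec, (hB t).eq, ← mulVec_mulVec]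
    _ = B *ᵥ b.equivFun t := by rw [leftMulMatrix_mulVec_equivFun, mul_one]

theorem exists_basis_leftMulMatrix_eq {F K : Type*} [Field F] [Field K] [Algebra F K]
    [FiniteDimensional F K] (ρ : K →ₐ[F] Matrix n n F) (hdim : finrank F K = Fintype.card n) :
    ∃ b : Basis n F K, leftMulMatrix b = ρ := by
  have : Nontrivial (n → F) := by
    rw [← finrank_pos_iff (R := F), finrank_fintype_fun_eq_card, ← hdim]
    exact finrank_pos
  obtain ⟨v, hv⟩ := exists_ne (0 : n → F)
  let e : K →ₗ[F] n → F := LinearMap.applyₗ v ∘ₗ toLin'.toLinearMap ∘ₗ ρ.toLinearMap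
  have he : ∀ t, e t = ρ t *ᵥ v := fun t => rfl
  -- `K` is a field, so `ρ t` is invertible for `t ≠ 0`
  have he_inj : Function.Injective e := by
    refine (injective_iff_map_eq_zero e).mpr fun t ht => by_contra fun h0 => hv ?_
    rw [← one_mulVec v, ← map_one ρ, ← inv_mul_cancel₀ h0, map_mul, ← mulVec_mulVec, ← he, ht,
      mulVec_zero]
  have he_bij : Function.Bijective e :=
    ⟨he_inj, (LinearMap.injective_iff_surjective_of_finrank_eq_finrank
      (by rw [hdim, finrank_fintype_fun_eq_card])).mp he_inj⟩
  set b := Basis.ofEquivFun (LinearEquiv.ofBijective e he_bij)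
  have hb : ∀ t, b.equivFun t = ρ t *ᵥ v := fun t => by
    rw [Basis.equivFun_ofEquivFun]; rfl
  refine ⟨b, AlgHom.ext fun s => ext_iff_mulVec.mpr fun w => ?_⟩
  obtain ⟨t, rfl⟩ := b.equivFun.surjective w
  rw [leftMulMatrix_mulVec_equivFun, hb, hb, map_mul, mulVec_mulVec]

theorem isIntegral_of_leftMulMatrix_eq_map [Algebra R A] [Algebra R S] [IsScalarTower R A S]
    (b : Basis n A S) {s : S} {M : Matrix n n R}
    (h : leftMulMatrix b s = M.map (algebraMap R A)) : IsIntegral R s := by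
  refine ⟨M.charpoly, M.charpoly_monic, leftMulMatrix_injective b ?_⟩
  rw [← Polynomial.aeval_def, map_zero, ← AlgHom.restrictScalars_apply R,
    ← Polynomial.aeval_algHom_apply, AlgHom.restrictScalars_apply, h,
    ← Polynomial.aeval_map_algebraMap A, ← charpoly_map, aeval_self_charpoly]

end Algebra

namespace AdjoinRoot

variable {R A : Type*} [CommRing R] [Ring A] [Algebra R A]

def aevalAlgHom (f : Polynomial R) (x : A) (hx : Polynomial.aeval x f = 0) :
    AdjoinRoot f →ₐ[R] A :=
  Ideal.Quotient.liftₐ _ (Polynomial.aeval x) fun q hq => by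
    obtain ⟨c, rfl⟩ := Ideal.mem_span_singleton.mp hq
    rw [map_mul, hx, zero_mul]

theorem commute_aevalAlgHom {f : Polynomial R} {x B : A} (hx : Polynomial.aeval x f = 0)
    (h : Commute B x) (t : AdjoinRoot f) : Commute B (aevalAlgHom f x hx t) := by
  induction t using AdjoinRoot.induction_on with
  | ih q =>
    exact Algebra.commute_of_mem_adjoin_singleton_of_commute
      (Polynomial.aeval_mem_adjoin_singleton R x) h

end AdjoinRoot

theorem NumberField.exists_unitsHom_leftMulMatrix_eq {K n G : Type*} [Field K] [Algebra ℚ K]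
    [Fintype n] [DecidableEq n] [Group G] (b : Basis n ℚ K) (M : G →* Matrix n n ℤ)
    (hM : ∀ g, ∃ s, Algebra.leftMulMatrix b s = (M g).map (↑)) :
    ∃ φ : G →* (𝓞 K)ˣ, ∀ g, Algebra.leftMulMatrix b (φ g : K) = (M g).map (↑) := by
  choose s hs using hM
  have hint : ∀ g, IsIntegral ℤ (s g) := fun g => Algebra.isIntegral_of_leftMulMatrix_eq_map b
    (by rw [hs, algebraMap_int_eq, Int.coe_castRingHom])
  have hs_one : s 1 = 1 := Algebra.leftMulMatrix_injective b <| by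
    rw [hs, map_one, map_one, Matrix.map_one _ Int.cast_zero Int.cast_one]
  have hs_mul : ∀ g h, s (g * h) = s g * s h := fun g h =>
    Algebra.leftMulMatrix_injective b <| by
    rw [map_mul, hs, hs, hs, map_mul]
    exact Matrix.map_mul (f := Int.castRingHom ℚ)
  let f : G →* 𝓞 K :=
    { toFun g := ⟨s g, hint g⟩
      map_one' := RingOfIntegers.ext hs_one
      map_mul' g h := RingOfIntegers.ext (hs_mul g h) }
  exact ⟨f.toHomUnits, hs⟩

namespace NumberField.mixedEmbedding

variable {K ι : Type*} [Field K] [NumberField K] [Fintype ι]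

theorem mixedEmbedding_rat_smul (c : ℚ) (x : K) :
    mixedEmbedding K (c • x) = (c : ℝ) • mixedEmbedding K x := by
  rw [map_rat_smul, Rat.cast_smul_eq_qsmul]

theorem top_le_span_mixedEmbedding_basis (b : Basis ι ℚ K) :
    ⊤ ≤ Submodule.span ℝ (Set.range (mixedEmbedding K ∘ b)) := by
  rw [← (latticeBasis K).span_eq, Submodule.span_le]
  rintro _ ⟨i, rfl⟩
  rw [latticeBasis_apply, ← b.sum_repr (integralBasis K i), map_sum]
  refine Submodule.sum_mem _ fun j _ => ?_
  rw [mixedEmbedding_rat_smul]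
  exact Submodule.smul_mem _ _ (Submodule.subset_span ⟨j, rfl⟩)

def basisOfRatBasis (b : Basis ι ℚ K) : Basis ι ℝ (mixedSpace K) :=
  basisOfTopLeSpanOfCardEqFinrank _ (top_le_span_mixedEmbedding_basis b)
    (by rw [mixedEmbedding.finrank, finrank_eq_card_basis b])

@[simp]
theorem basisOfRatBasis_apply (b : Basis ι ℚ K) (i : ι) :
    basisOfRatBasis b i = mixedEmbedding K (b i) := by
  simp [basisOfRatBasis]

def euclideanEquivOfBasis (b : Basis ι ℚ K) : EuclideanSpace ℝ ι ≃ₗ[ℝ] mixedSpace K :=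
  (WithLp.linearEquiv 2 ℝ (ι → ℝ)).trans (basisOfRatBasis b).equivFun.symm

theorem euclideanEquivOfBasis_toLp_ratCast (b : Basis ι ℚ K) (q : ι → ℚ) :
    euclideanEquivOfBasis b (toLp 2 fun i => (q i : ℝ)) =
      mixedEmbedding K (b.equivFun.symm q) := by
  simp [euclideanEquivOfBasis, Basis.equivFun_symm_apply, map_sum, mixedEmbedding_rat_smul]

theorem mixedEmbedding_mul_euclideanEquivOfBasis [DecidableEq ι] (b : Basis ι ℚ K) (s : K)
    (v : EuclideanSpace ℝ ι) :
    mixedEmbedding K s * euclideanEquivOfBasis b v =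
      euclideanEquivOfBasis b (toLp 2 ((Algebra.leftMulMatrix b s).map (↑) *ᵥ ofLp v)) := by
  suffices LinearMap.mulLeft ℝ (mixedEmbedding K s) ∘ₗ (euclideanEquivOfBasis b).toLinearMap =
      (euclideanEquivOfBasis b).toLinearMap ∘ₗ
        toLpLin 2 2 ((Algebra.leftMulMatrix b s).map (↑)) from
    LinearMap.congr_fun this v
  refine (EuclideanSpace.basisFun ι ℝ).toBasis.ext fun i => ?_
  have hsingle : EuclideanSpace.basisFun ι ℝ i =
      toLp 2 fun j => ((Pi.single i 1 : ι → ℚ) j : ℝ) := by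
    ext j; by_cases h : j = i <;> simp [h]
  have hmap :
      (Algebra.leftMulMatrix b s).map (↑) *ᵥ (fun j => ((Pi.single i 1 : ι → ℚ) j : ℝ)) =
      fun j => ((Algebra.leftMulMatrix b s *ᵥ Pi.single i 1) j : ℝ) := by
    ext j; exact ((Rat.castHom ℝ).map_mulVec _ _ j).symm
  rw [OrthonormalBasis.coe_toBasis, hsingle, LinearMap.comp_apply, LinearMap.comp_apply,
    toLpLin_apply]
  simp only [LinearEquiv.coe_coe, LinearMap.mulLeft_apply, hmap,
    euclideanEquivOfBasis_toLp_ratCast, ← map_mul]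
  congr 1
  apply b.equivFun.injective
  rw [← Algebra.leftMulMatrix_mulVec_equivFun, LinearEquiv.apply_symm_apply,
    LinearEquiv.apply_symm_apply]

end NumberField.mixedEmbedding

theorem matVec_eq_mulVec {d : ℕ} (M : Matrix (Fin d) (Fin d) ℤ)
    (v : EuclideanSpace ℝ (Fin d)) :
    matVec M v = toLp 2 (M.map (↑) *ᵥ ofLp v) := rfl

theorem matVec_mem_intLattice {d : ℕ} (M : Matrix (Fin d) (Fin d) ℤ)
    {v : EuclideanSpace ℝ (Fin d)} (hv : v ∈ intLattice d) : matVec M v ∈ intLattice d := by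
  intro i
  choose n hn using hv
  exact ⟨∑ j, M i j * n j, by simp [matVec, hn]⟩

open NumberField.mixedEmbedding in
theorem mixedEmbedding_mul_euclideanEquivOfBasis_eq_matVec {d : ℕ} {K : Type*} [Field K]
    [NumberField K] (b : Basis (Fin d) ℚ K) {s : K} {M : Matrix (Fin d) (Fin d) ℤ}
    (h : Algebra.leftMulMatrix b s = M.map (↑)) (v : EuclideanSpace ℝ (Fin d)) :
    mixedEmbedding K s * euclideanEquivOfBasis b v = euclideanEquivOfBasis b (matVec M v) := by
  rw [mixedEmbedding_mul_euclideanEquivOfBasis, h, Matrix.map_map, matVec_eq_mulVec]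
  simp only [Function.comp_def, Rat.cast_intCast]

open NumberField.mixedEmbedding in
def IrredConjData.ofBasis {d : ℕ} {G : Subgroup (SLZ d)} {K : Type} [Field K] [NumberField K]
    (b : Basis (Fin d) ℚ K) (φ : G →* (𝓞 K)ˣ)
    (hφ : ∀ g, Algebra.leftMulMatrix b (φ g : K) =
      ((g : SLZ d) : Matrix (Fin d) (Fin d) ℤ).map (↑)) :
    IrredConjData d G where
  K := K
  deg := by rw [finrank_eq_card_basis b, Fintype.card_fin]
  φ := φ
  φinj g h hgh := Subtype.ext <| Subtype.ext <|
    Matrix.map_injective (Int.cast_injective (α := ℚ)) <| by simp only [← hφ, hgh]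
  Γ := (intLattice d).map (euclideanEquivOfBasis b).toAddMonoidHom
  ΓinK x hx := by
    obtain ⟨v, hv, rfl⟩ := AddSubgroup.mem_map.mp hx
    choose n hn using hv
    refine ⟨b.equivFun.symm fun i => (n i : ℚ), ?_⟩
    rw [← euclideanEquivOfBasis_toLp_ratCast]
    simp_rw [Rat.cast_intCast, ← hn]
    rfl
  Γinv g x hx := by
    obtain ⟨v, hv, rfl⟩ := AddSubgroup.mem_map.mp hx
    exact (mixedEmbedding_mul_euclideanEquivOfBasis_eq_matVec b (hφ g) v).symm ▸
      AddSubgroup.mem_map_of_mem _ (matVec_mem_intLattice _ hv)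
  ψ := euclideanEquivOfBasis b
  ψlat v := AddSubgroup.mem_map_iff_mem (euclideanEquivOfBasis b).injective
  conj g v := by
    rw [mixedEmbedding_mul_euclideanEquivOfBasis_eq_matVec b (hφ g), LinearEquiv.symm_apply_apply]

/-- **Conjugating an abelian irreducible action to a unit action on `K ⊗_ℚ ℝ`**
(Proposition 2.15 of the paper). If an abelian subgroup `G ≤ SL_d(ℤ)` contains an element
acting irreducibly on `𝕋^d`, then there exist a degree-`d` number field `K`, an isomorphism
`φ` from `G` onto a subgroup of `U_K`, a rank-`d` lattice `Γ ⊂ K ⊂ K ⊗_ℚ ℝ` invariant under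
multiplication by `φ(G)`, and a linear isomorphism `ψ : ℝ^d → K ⊗_ℚ ℝ` with `ψ(ℤ^d) = Γ`
conjugating the `G`-action to the multiplication action of `φ(G)`. -/
theorem conjugation_to_unit_action (d : ℕ) (G : Subgroup (SLZ d))
    (hab : ∀ a ∈ G, ∀ b ∈ G, a * b = b * a)
    (hirr : ∃ g ∈ G, IrreducibleMat g) :
    Nonempty (IrredConjData d G) := by
  obtain ⟨g, hgG, hg⟩ := hirr
  let A : Matrix (Fin d) (Fin d) ℚ := (g : Matrix (Fin d) (Fin d) ℤ).map (Int.castRingHom ℚ)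
  have : Fact (Irreducible A.charpoly) := ⟨by rwa [charpoly_map]⟩
  let ρ := AdjoinRoot.aevalAlgHom A.charpoly A (aeval_self_charpoly A)
  obtain ⟨b, hb⟩ := Algebra.exists_basis_leftMulMatrix_eq ρ
    ((AdjoinRoot.isAdjoinRootMonic _ A.charpoly_monic).finrank.trans A.charpoly_natDegree_eq_dim)
  have hcomm : ∀ h ∈ G, Commute ((h : Matrix (Fin d) (Fin d) ℤ).map (↑)) A := fun h hh =>
    ((show Commute h g from hab h hh g hgG).map SpecialLinearGroup.coeMonoidHom).map
      (Int.castRingHom ℚ).mapMatrix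
  obtain ⟨φ, hφ⟩ := NumberField.exists_unitsHom_leftMulMatrix_eq b
    (SpecialLinearGroup.coeMonoidHom.comp G.subtype) fun h =>
      Algebra.exists_leftMulMatrix_eq_of_commute b fun t =>
        hb ▸ (AdjoinRoot.commute_aevalAlgHom _ (hcomm h h.2) t).symm
  exact ⟨IrredConjData.ofBasis b φ hφ⟩

end
end

section
/- Let g ∈ SL_d(ℤ) be totally irreducible, i.e. the characteristic polynomial of g^n is irreducible over ℚ for every n ≥ 1. Let ζ ∈ ℂ be an eigenvalue of g and let K = ℚ(ζ), a number field of degree d. Then K is not a CM-field. -/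
open scoped BigOperators NumberField
open NumberField

noncomputable section

/-- A family of elements of a group is multiplicatively independent if no nontrivial integer
power combination of its members is the identity. -/
def MulIndepFam {H : Type*} [Group H] {k : ℕ} (f : Fin k → H) : Prop :=
  ∀ c : Fin k → ℤ, (List.ofFn fun i => f i ^ c i).prod = 1 → c = 0

/-- The (torsion-free) rank of a subgroup is at least `k`. -/
def RankGE {H : Type*} [Group H] (G : Subgroup H) (k : ℕ) : Prop :=
  ∃ f : Fin k → H, (∀ i, f i ∈ G) ∧ MulIndepFam f

/-- The subgroup of units of `𝓞 K` lying in a subfield `F` of `K`; it is canonically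
isomorphic to the unit group of the ring of integers of `F`. -/
def unitsInSubfield (K : Type*) [Field K] (F : Subfield K) : Subgroup (𝓞 K)ˣ where
  carrier := {u | algebraMap (𝓞 K) K ((u : (𝓞 K)ˣ) : 𝓞 K) ∈ F}
  one_mem' := by simpa using F.one_mem
  mul_mem' := by
    intro a b ha hb
    simpa using F.mul_mem ha hb
  inv_mem' := by
    intro a ha
    show algebraMap (𝓞 K) K ((a⁻¹ : (𝓞 K)ˣ) : 𝓞 K) ∈ F
    have h : algebraMap (𝓞 K) K ((a⁻¹ : (𝓞 K)ˣ) : 𝓞 K)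
        * algebraMap (𝓞 K) K ((a : (𝓞 K)ˣ) : 𝓞 K) = 1 := by
      rw [← map_mul, Units.inv_mul, map_one]
    rw [eq_inv_of_mul_eq_one_left h]
    exact F.inv_mem ha

/-- `K` is a CM-field: it has a proper subfield `F` with `rank U_F = rank U_K`
(since `U_F ≤ U_K`, this is expressed as: every `k` with `rank U_K ≥ k` also has
`rank U_F ≥ k`). -/
def IsCM (K : Type*) [Field K] : Prop :=
  ∃ F : Subfield K, F ≠ ⊤ ∧
    ∀ k : ℕ, RankGE (⊤ : Subgroup (𝓞 K)ˣ) k → RankGE (unitsInSubfield K F) k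

/-- The logarithmic Mahler measure (base 2) of a unit of `𝓞 K`:
`h^Mah(u) = ∑_{σ : K →+* ℂ} log₊ |σ(u)|`. -/
def unitHMah (K : Type*) [Field K] [NumberField K] (u : (𝓞 K)ˣ) : ℝ :=
  ∑ σ : K →+* ℂ, max 0 (Real.logb 2 ‖σ (algebraMap (𝓞 K) K (u : 𝓞 K))‖)

/-- The size of (virtually) fundamental units of a subgroup `U ≤ U_K`: the infimum of all
`F > 0` such that the units of `U` of logarithmic Mahler measure at most `F` generate a
finite-index subgroup of `U`. -/
def fundSize (K : Type*) [Field K] [NumberField K] (U : Subgroup (𝓞 K)ˣ) : ℝ :=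
  sInf {F : ℝ | 0 < F ∧
    (Subgroup.closure {t : (𝓞 K)ˣ | t ∈ U ∧ unitHMah K t ≤ F}).relIndex U ≠ 0}

/-!
If `ℚ(ζ)` had a proper subfield `F` whose units have full rank, comparing `r₁ + r₂ - 1` for
`ℚ(ζ)` and `F` forces `ℚ(ζ)` to be totally complex and quadratic over the totally real `F`,
i.e. CM in the usual sense. In a CM field `u / ū` is a root of unity for every unit `u`, so
`u ^ w` is real, `w` being the number of roots of unity. Applied to the unit `ζ`, the element
`ζ ^ w` lies in the maximal real subfield and has degree at most `d / 2`. But `ζ ^ w` is a root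
of the characteristic polynomial of `g ^ w`, which is irreducible of degree `d`.
-/

open Polynomial Module NumberField.Units

theorem mulIndepFam_iff_linearIndependent {H : Type*} [CommGroup H] {k : ℕ} (f : Fin k → H) :
    MulIndepFam f ↔ LinearIndependent ℤ (fun i => Additive.ofMul (f i)) := by
  rw [Fintype.linearIndependent_iff, MulIndepFam]
  refine forall_congr' fun c => ?_
  rw [List.prod_ofFn, ← ofMul_eq_zero, ofMul_prod, funext_iff]
  simp only [ofMul_zpow, Pi.zero_apply]

section MulIndep

variable {H H' : Type*} [Group H] [Group H'] {k : ℕ}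

theorem MulIndepFam.of_comp (φ : H →* H') {f : Fin k → H} (h : MulIndepFam (φ ∘ f)) :
    MulIndepFam f := fun c hc =>
  h c (by simpa [map_list_prod, List.map_ofFn, Function.comp_def] using congrArg φ hc)

theorem RankGE.of_le_range (φ : H →* H') {G : Subgroup H'} (hG : G ≤ φ.range)
    (h : RankGE G k) : RankGE (⊤ : Subgroup H) k := by
  obtain ⟨f, hfG, hf⟩ := h
  choose f' hf' using fun i => hG (hfG i)
  refine ⟨f', fun _ => trivial, MulIndepFam.of_comp φ ?_⟩
  convert hf using 1
  exact funext hf'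

end MulIndep

section Units

variable {K : Type*} [Field K]

theorem exists_units_coe_eq_of_isIntegral {x : K} (hx : IsIntegral ℤ x)
    (hx' : IsIntegral ℤ x⁻¹) (h0 : x ≠ 0) : ∃ u : (𝓞 K)ˣ, (u : K) = x :=
  ⟨Units.mkOfMulEqOne ⟨x, hx⟩ ⟨x⁻¹, hx'⟩ (RingOfIntegers.ext (mul_inv_cancel₀ h0)), rfl⟩

theorem unitsInSubfield_le_range (F : Subfield K) :
    unitsInSubfield K F ≤ (Units.map (algebraMap (𝓞 F) (𝓞 K)).toMonoidHom).range := by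
  have lift : ∀ x : 𝓞 K, (x : K) ∈ F → ∃ y : 𝓞 F, algebraMap (𝓞 F) (𝓞 K) y = x := fun x hx =>
    ⟨⟨⟨x, hx⟩, (isIntegral_algebraMap_iff (algebraMap F K).injective).1 x.isIntegral_coe⟩, rfl⟩
  intro u hu
  obtain ⟨y, hy⟩ := lift u hu
  obtain ⟨z, hz⟩ := lift ↑u⁻¹ ((unitsInSubfield K F).inv_mem hu)
  have hyz : y * z = 1 := FaithfulSMul.algebraMap_injective (𝓞 F) (𝓞 K) <| by
    rw [map_mul, hy, hz, Units.mul_inv, map_one]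
  exact ⟨Units.mkOfMulEqOne y z hyz, Units.ext hy⟩

variable [NumberField K]

theorem MulIndepFam.card_le_rank {k : ℕ} {u : Fin k → (𝓞 K)ˣ} (h : MulIndepFam u) :
    k ≤ rank K := by
  simpa [finrank_eq] using! ((mulIndepFam_iff_linearIndependent u).1 h).fintype_card_le_finrank

theorem RankGE.le_rank {G : Subgroup (𝓞 K)ˣ} {k : ℕ} (h : RankGE G k) : k ≤ rank K :=
  h.choose_spec.2.card_le_rank

variable (K) in
theorem rankGE_top_rank : RankGE (⊤ : Subgroup (𝓞 K)ˣ) (rank K) := by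
  refine ⟨fundSystem K, fun _ => trivial, (mulIndepFam_iff_linearIndependent _).2 ?_⟩
  refine LinearIndependent.of_comp (logEmbedding K).toIntLinearMap ?_
  simpa [Function.comp_def, logEmbedding_fundSystem] using
    (basisUnitLattice K).linearIndependent.map' (unitLattice K).subtype (Submodule.ker_subtype _)

theorem Subfield.one_lt_finrank_of_ne_top {F : Subfield K} (hF : F ≠ ⊤) : 1 < finrank F K := by
  refine lt_of_le_of_ne finrank_pos fun h => hF ?_
  rwa [eq_comm, ← Subfield.relfinrank_top_right, Subfield.relfinrank_eq_one_iff, top_le_iff] at h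

end Units

namespace NumberField.IsCMField

section OfRank

variable {K : Type*} [Field K] [NumberField K]

/- With `e = [K : F] ≥ 2`: `r₁(K) + r₂(K) ≥ [K : ℚ] / 2 ≥ [F : ℚ] ≥ r₁(F) + r₂(F)`, so the rank
inequality forces `r₁(K) = 0`, `r₂(F) = 0` and `e = 2`. -/
theorem of_units_rank_le (F : Type*) [Field F] [NumberField F] [Algebra F K]
    (hFK : 1 < finrank F K) (hrank : rank K ≤ rank F) : IsCMField K := by
  have hK := InfinitePlace.card_add_two_mul_card_eq_rank K
  have hF := InfinitePlace.card_add_two_mul_card_eq_rank F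
  have hKr : rank K + 1 = InfinitePlace.nrRealPlaces K + InfinitePlace.nrComplexPlaces K := by
    rw [← InfinitePlace.card_eq_nrRealPlaces_add_nrComplexPlaces]
    exact Nat.sub_add_cancel Fintype.card_pos
  have hFr : rank F + 1 = InfinitePlace.nrRealPlaces F + InfinitePlace.nrComplexPlaces F := by
    rw [← InfinitePlace.card_eq_nrRealPlaces_add_nrComplexPlaces]
    exact Nat.sub_add_cancel Fintype.card_pos
  have htower := finrank_mul_finrank ℚ F K
  have hFpos := finrank_pos (R := ℚ) (M := F)
  have hle : 2 * finrank ℚ F ≤ finrank ℚ K := htower ▸ by nlinarith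
  have : IsTotallyComplex K := nrRealPlaces_eq_zero_iff.1 (by omega)
  have : IsTotallyReal F := nrComplexPlaces_eq_zero_iff.1 (by omega)
  have : Algebra.IsQuadraticExtension F K := ⟨Nat.eq_of_mul_eq_mul_left hFpos (by omega)⟩
  exact ofCMExtension F K

theorem _root_.IsCM.isCMField (h : IsCM K) : IsCMField K := by
  obtain ⟨F, hF, hrank⟩ := h
  exact of_units_rank_le F (Subfield.one_lt_finrank_of_ne_top hF)
    ((hrank _ (rankGE_top_rank K)).of_le_range _ (unitsInSubfield_le_range F)).le_rank

end OfRank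

theorem coe_mem_maximalRealSubfield {K : Type*} [Field K] [CharZero K] {u : (𝓞 K)ˣ}
    (hu : u ∈ realUnits K) : (u : K) ∈ maximalRealSubfield K := by
  obtain ⟨v, hv⟩ := (mem_realUnits_iff K u).1 hu
  rw [← Units.coe_coe, ← hv]
  exact ((v : 𝓞 (maximalRealSubfield K)) : maximalRealSubfield K).prop

variable {K : Type*} [Field K] [NumberField K] [IsCMField K]

theorem pow_torsionOrder_mem_realUnits (u : (𝓞 K)ˣ) : u ^ torsionOrder K ∈ realUnits K := by
  rw [← unitsMulComplexConjInv_ker, MonoidHom.mem_ker, map_pow, torsionOrder, pow_card_eq_one']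

theorem natDegree_minpoly_lt_finrank {x : K} (hx : x ∈ maximalRealSubfield K) :
    (minpoly ℚ x).natDegree < finrank ℚ K := by
  have hdeg : (minpoly ℚ x).natDegree ≤ finrank ℚ (maximalRealSubfield K) := by
    rw [show x = IsScalarTower.toAlgHom ℚ (maximalRealSubfield K) K ⟨x, hx⟩ from rfl,
      minpoly.algHom_eq _ (algebraMap (maximalRealSubfield K) K).injective]
    exact minpoly.natDegree_le _
  rw [← finrank_mul_finrank ℚ (maximalRealSubfield K) K,
    Algebra.IsQuadraticExtension.finrank_eq_two (maximalRealSubfield K) K]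
  have := finrank_pos (R := ℚ) (M := maximalRealSubfield K)
  omega

theorem exists_pow_natDegree_minpoly_lt (u : (𝓞 K)ˣ) :
    ∃ n, 0 < n ∧ (minpoly ℚ ((u : K) ^ n)).natDegree < finrank ℚ K :=
  ⟨torsionOrder K, torsionOrder_pos K, natDegree_minpoly_lt_finrank <| by
    simpa using coe_mem_maximalRealSubfield (pow_torsionOrder_mem_realUnits u)⟩

end NumberField.IsCMField

namespace Matrix

variable {n : Type*} [Fintype n] [DecidableEq n] {R K : Type*} [CommRing R] [Field K]

theorem isRoot_charpoly_map_iff_mem_spectrum (f : R →+* K) (M : Matrix n n R) (x : K) :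
    (M.charpoly.map f).IsRoot x ↔ x ∈ spectrum K (M.map f) := by
  rw [← charpoly_map, mem_spectrum_iff_isRoot_charpoly]

theorem isRoot_charpoly_map_pow {f : R →+* K} {M : Matrix n n R} {x : K}
    (h : (M.charpoly.map f).IsRoot x) (k : ℕ) : ((M ^ k).charpoly.map f).IsRoot (x ^ k) := by
  rw [isRoot_charpoly_map_iff_mem_spectrum] at h ⊢
  rw [Matrix.map_pow]
  exact spectrum.pow_mem_pow _ k h

theorem ne_zero_of_isRoot_charpoly_map {f : R →+* K} {a : (Matrix n n R)ˣ} {x : K}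
    (h : ((a : Matrix n n R).charpoly.map f).IsRoot x) : x ≠ 0 := by
  rw [isRoot_charpoly_map_iff_mem_spectrum] at h
  exact spectrum.ne_zero_of_mem_of_unit (a := Units.map f.mapMatrix.toMonoidHom a) (by exact h)

theorem inv_isRoot_charpoly_map_inv {f : R →+* K} {a : (Matrix n n R)ˣ} {x : K}
    (h : ((a : Matrix n n R).charpoly.map f).IsRoot x) :
    ((↑a⁻¹ : Matrix n n R).charpoly.map f).IsRoot x⁻¹ := by
  have hx := ne_zero_of_isRoot_charpoly_map h
  rw [isRoot_charpoly_map_iff_mem_spectrum] at h ⊢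
  simpa using (spectrum.inv_mem_iff (r := Units.mk0 x hx)
    (a := Units.map f.mapMatrix.toMonoidHom a)).1 (by exact h)

theorem isIntegral_of_isRoot_charpoly_map {M : Matrix n n ℤ} {x : K}
    (h : (M.charpoly.map (Int.castRingHom K)).IsRoot x) : IsIntegral ℤ x :=
  ⟨M.charpoly, M.charpoly_monic, by rwa [eval₂_eq_eval_map]⟩

theorem minpoly_eq_charpoly_map [CharZero K] {M : Matrix n n ℤ} {x : K}
    (hirr : Irreducible (M.charpoly.map (Int.castRingHom ℚ)))
    (h : (M.charpoly.map (Int.castRingHom K)).IsRoot x) :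
    minpoly ℚ x = M.charpoly.map (Int.castRingHom ℚ) := by
  refine (minpoly.eq_of_irreducible_of_monic hirr ?_ (M.charpoly_monic.map _)).symm
  rwa [aeval_def, eval₂_eq_eval_map, Polynomial.map_map,
    RingHom.ext_int ((algebraMap ℚ K).comp _)]

end Matrix

theorem TotallyIrreducibleMat.natDegree_minpoly_pow {K : Type*} [Field K] [CharZero K] {d : ℕ}
    {g : SLZ d} (hg : TotallyIrreducibleMat g) {x : K}
    (hx : (((g : Matrix (Fin d) (Fin d) ℤ).charpoly).map (Int.castRingHom K)).IsRoot x) {k : ℕ}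
    (hk : 0 < k) : (minpoly ℚ (x ^ k)).natDegree = d := by
  have hxk := Matrix.isRoot_charpoly_map_pow hx k
  rw [← Matrix.SpecialLinearGroup.coe_pow] at hxk
  rw [Matrix.minpoly_eq_charpoly_map (hg k hk) hxk, (Matrix.charpoly_monic _).natDegree_map,
    Matrix.charpoly_natDegree_eq_dim, Fintype.card_fin]

open IntermediateField in
/-- **Total irreducibility forces a non-CM field** (Proposition 2.17 of the paper).
If `g ∈ SL_d(ℤ)` is totally irreducible and `ζ ∈ ℂ` is an eigenvalue of `g`, then the number
field `K = ℚ(ζ)` (of degree `d`) is not a CM-field. -/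
theorem not_CM_of_totally_irreducible (d : ℕ) (g : SLZ d)
    (hg : TotallyIrreducibleMat g) (ζ : ℂ)
    (hζ : (((g : Matrix (Fin d) (Fin d) ℤ).charpoly).map (Int.castRingHom ℂ)).IsRoot ζ) :
    ¬ IsCM (IntermediateField.adjoin ℚ {ζ}) := by
  intro hCM
  have hint := Matrix.isIntegral_of_isRoot_charpoly_map hζ
  have : FiniteDimensional ℚ ℚ⟮ζ⟯ := adjoin.finiteDimensional hint.tower_top
  have : NumberField ℚ⟮ζ⟯ := ⟨⟩
  have : IsCMField ℚ⟮ζ⟯ := hCM.isCMField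
  have hfinrank : finrank ℚ ℚ⟮ζ⟯ = d := by
    rw [adjoin.finrank hint.tower_top, ← pow_one ζ, hg.natDegree_minpoly_pow hζ one_pos]
  have hζ' : ((↑(Matrix.SpecialLinearGroup.toGL g) : Matrix (Fin d) (Fin d) ℤ).charpoly.map
      (Int.castRingHom ℂ)).IsRoot ζ := hζ
  have hval : ∀ y : ℚ⟮ζ⟯, IsIntegral ℤ (y : ℂ) → IsIntegral ℤ y := fun _ =>
    (isIntegral_algHom_iff ((val ℚ⟮ζ⟯).restrictScalars ℤ) Subtype.val_injective).1
  obtain ⟨u, hu⟩ := exists_units_coe_eq_of_isIntegral (x := AdjoinSimple.gen ℚ ζ) (hval _ hint)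
    (hval _ (Matrix.isIntegral_of_isRoot_charpoly_map (Matrix.inv_isRoot_charpoly_map_inv hζ')))
    (Subtype.coe_ne_coe.1 (Matrix.ne_zero_of_isRoot_charpoly_map hζ'))
  obtain ⟨n, hn, hlt⟩ := IsCMField.exists_pow_natDegree_minpoly_lt u
  -- `hlt` is stated for the ℚ-algebra structure `algebraRat`, not the one of `ℚ⟮ζ⟯ ⊆ ℂ`.
  rw [hu, ← minpoly.algHom_eq ((val ℚ⟮ζ⟯ : ℚ⟮ζ⟯ →+* ℂ).toRatAlgHom) Subtype.val_injective,
    map_pow, RingHom.toRatAlgHom_apply, RingHom.coe_coe, coe_val, AdjoinSimple.coe_gen,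
    hg.natDegree_minpoly_pow hζ hn, hfinrank] at hlt
  exact lt_irrefl d hlt

end
end

section
/- For every integer r ≥ 2 there exists an effective constant c = c(r) > 0 such that for every N ∈ ℕ, any finite family of proper linear subspaces of ℝ^r whose union contains the grid I_N^r = {−N, −N+1, …, N−1, N}^r ⊂ ℤ^r has cardinality at least c·N. -/
/-!
A proper subspace `W` of `K^ι` misses some standard basis vector `e_j`, so a point of `W` is
determined by its coordinates off `j`. Hence overwriting the `j`-th coordinate of the points of
`W ∩ A^ι` by arbitrary elements of `A` is injective, and `W` contains at most `|A|^(|ι|-1)` points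
of the box `A^ι`. Covering the whole box, of size `|A|^|ι|`, thus takes at least `|A|` proper
subspaces; for the grid `{-N, …, N}^r` this gives `2N + 1 ≥ N` of them, i.e. `c = 1`.
-/

open Finset

namespace Submodule

variable {K ι : Type*} [Field K] [DecidableEq ι]

theorem exists_single_one_notMem_of_ne_top [Fintype ι] {W : Submodule K (ι → K)} (hW : W ≠ ⊤) :
    ∃ j, Pi.single j 1 ∉ W := by
  by_contra! h
  refine hW (eq_top_iff.2 ?_)
  rw [← (Pi.basisFun K ι).span_eq, span_le]
  rintro _ ⟨j, rfl⟩
  simpa using h j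

theorem eq_of_mem_of_forall_ne_eq {W : Submodule K (ι → K)} {j : ι} (hj : Pi.single j 1 ∉ W)
    {v w : ι → K} (hv : v ∈ W) (hw : w ∈ W) (hvw : ∀ i ≠ j, v i = w i) : v = w := by
  have hdiff : v - w = (v j - w j) • Pi.single j (1 : K) := by
    ext i
    by_cases hi : i = j
    · subst hi; simp
    · simp [hi, hvw i hi]
  have hcoeff : v j - w j = 0 := by
    by_contra hne
    exact hj ((smul_mem_iff W hne).1 (hdiff ▸ W.sub_mem hv hw))
  funext i
  by_cases hi : i = j
  · subst hi; exact sub_eq_zero.1 hcoeff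
  · exact hvw i hi

open Classical in
theorem card_filter_mem_piFinset_mul_card_le [Fintype ι] {W : Submodule K (ι → K)} (hW : W ≠ ⊤)
    (A : Finset K) :
    #{v ∈ Fintype.piFinset fun _ : ι => A | v ∈ W} * #A ≤ #A ^ Fintype.card ι := by
  obtain ⟨j, hj⟩ := exists_single_one_notMem_of_ne_top hW
  rw [← card_product]
  refine (card_le_card_of_injOn (t := Fintype.piFinset fun _ : ι => A)
    (fun p => Function.update p.1 j p.2) ?_ ?_).trans (by simp)
  · rintro ⟨v, a⟩ hva
    simp only [coe_product, Set.mem_prod, mem_coe, mem_filter, Fintype.mem_piFinset] at hva ⊢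
    intro i
    by_cases hi : i = j
    · subst hi; simpa using hva.2
    · simpa [hi] using hva.1.1 i
  · rintro ⟨v, a⟩ hva ⟨w, b⟩ hwb h
    simp only [coe_product, Set.mem_prod, mem_coe, mem_filter] at hva hwb
    have hab : a = b := by simpa using congrFun h j
    refine Prod.ext (eq_of_mem_of_forall_ne_eq hj hva.1.2 hwb.1.2 fun i hi => ?_) hab
    simpa [hi] using congrFun h i

theorem card_le_card_of_covers_piFinset [Fintype ι] {S : Finset (Submodule K (ι → K))}
    (hS : ∀ W ∈ S, W ≠ ⊤) {A : Finset K} (hA : A.Nonempty)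
    (hcover : ∀ x ∈ Fintype.piFinset fun _ : ι => A, ∃ W ∈ S, x ∈ W) : #A ≤ #S := by
  classical
  set B := Fintype.piFinset fun _ : ι => A
  have hB : #B = #A ^ Fintype.card ι := by simp [B]
  have hsub : B ⊆ S.biUnion fun W => {v ∈ B | v ∈ W} := by
    intro x hx
    obtain ⟨W, hWS, hxW⟩ := hcover x hx
    exact mem_biUnion.2 ⟨W, hWS, mem_filter.2 ⟨hx, hxW⟩⟩
  have hpos : 0 < #A ^ Fintype.card ι := pow_pos hA.card_pos _
  refine le_of_mul_le_mul_left ?_ hpos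
  calc #A ^ Fintype.card ι * #A = #B * #A := by rw [hB]
    _ ≤ (∑ W ∈ S, #{v ∈ B | v ∈ W}) * #A :=
        Nat.mul_le_mul_right _ ((card_le_card hsub).trans card_biUnion_le)
    _ = ∑ W ∈ S, #{v ∈ B | v ∈ W} * #A := sum_mul ..
    _ ≤ ∑ _W ∈ S, #A ^ Fintype.card ι :=
        sum_le_sum fun W hW => card_filter_mem_piFinset_mul_card_le (hS W hW) A
    _ = #A ^ Fintype.card ι * #S := by rw [sum_const, smul_eq_mul, mul_comm]

end Submodule

theorem grid_cover_lower_bound_general (r : ℕ) :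
    ∃ c : ℝ, 0 < c ∧
      ∀ (N : ℕ) (S : Finset (Submodule ℝ (Fin r → ℝ))),
        (∀ W ∈ S, W ≠ ⊤) →
        (∀ v : Fin r → ℤ, (∀ i, |v i| ≤ (N : ℤ)) →
          ∃ W ∈ S, (fun i => (v i : ℝ)) ∈ W) →
        c * (N : ℝ) ≤ (S.card : ℝ) := by
  refine ⟨1, one_pos, fun N S hS hcover => ?_⟩
  set A : Finset ℝ := (Icc (-(N : ℤ)) N).image (Int.cast : ℤ → ℝ)
  have hA : #A = 2 * N + 1 := by
    rw [card_image_of_injective _ Int.cast_injective, Int.card_Icc]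
    omega
  have hbox : ∀ x ∈ Fintype.piFinset fun _ : Fin r => A, ∃ W ∈ S, x ∈ W := by
    intro x hx
    choose v hv hvx using fun i => mem_image.1 (Fintype.mem_piFinset.1 hx i)
    obtain ⟨W, hWS, hW⟩ := hcover v fun i => abs_le.2 (mem_Icc.1 (hv i))
    exact ⟨W, hWS, by rwa [← funext hvx]⟩
  have hcard : #A ≤ #S := Submodule.card_le_card_of_covers_piFinset hS
    ⟨0, mem_image.2 ⟨0, by simp, Int.cast_zero⟩⟩ hbox
  rw [one_mul]
  exact_mod_cast (by omega : N ≤ #S)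

/-- **Covering a grid by proper subspaces** (Lemma 3.1 of the paper).
For every `r ≥ 2` there is an effective constant `c = c(r) > 0` such that for every `N ∈ ℕ`,
any finite family of proper linear subspaces of `ℝ^r` whose union contains the grid
`I_N^r = {-N, …, N}^r ⊂ ℤ^r` has cardinality at least `c·N`. -/
theorem grid_cover_lower_bound (r : ℕ) (hr : 2 ≤ r) :
    ∃ c : ℝ, 0 < c ∧
      ∀ (N : ℕ) (S : Finset (Submodule ℝ (Fin r → ℝ))),
        (∀ W ∈ S, W ≠ ⊤) →
        (∀ v : Fin r → ℤ, (∀ i, |v i| ≤ (N : ℤ)) →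
          ∃ W ∈ S, (fun i => (v i : ℝ)) ∈ W) →
        c * (N : ℝ) ≤ (S.card : ℝ) :=
  grid_cover_lower_bound_general r
end

section
/- Let f: ℂ → ℝ be a nonzero ℝ-linear form on ℂ viewed as a two-dimensional real vector space, let λ > 0 and c > 0, and let v, w ∈ ℂ satisfy |v| ≥ c, |w| ≥ c, |f(v)| ≤ λ·‖f‖ and |f(w)| ≤ λ·‖f‖. Then the arguments of v and w are (πλ/c)-close up to a multiple of π: there exists m ∈ ℤ such that |arg v − arg w − mπ| ≤ πλ/c. -/
/-!
Write `f(z) = Re (conj a * z)` with `a = f₁ + f₂ i`; then `f(z) = ‖a‖ ‖z‖ cos (arg z - arg a)`,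
so the hypotheses say `|cos (arg z - arg a)| ≤ λ / c` for `z = v, w`. By Jordan's inequality
`(2/π) |x| ≤ |sin x|` on `[-π/2, π/2]`, a small cosine puts `arg z - arg a` within
`(π/2) (λ/c)` of `π/2 + πℤ`, and subtracting the two estimates for `v` and `w` cancels `arg a`.
-/

open Real Complex ComplexConjugate

theorem Real.exists_int_abs_sub_le_mul_abs_cos (θ : ℝ) :
    ∃ k : ℤ, |θ - π / 2 - k * π| ≤ π / 2 * |cos θ| := by
  set k := round ((θ - π / 2) / π)
  set x := θ - π / 2 - k * π
  have hx : |x| ≤ π / 2 := by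
    have hxπ : x = ((θ - π / 2) / π - k) * π := by
      rw [sub_mul, div_mul_cancel₀ _ pi_ne_zero]
    rw [hxπ, abs_mul, abs_of_pos pi_pos]
    nlinarith [abs_sub_round ((θ - π / 2) / π), pi_pos]
  have hcos : |cos θ| = |sin x| := by
    have hθ : θ = x + π / 2 + k * π := by ring
    rw [hθ, cos_add_int_mul_pi, cos_add_pi_div_two, abs_mul, abs_neg_one_zpow, one_mul,
      abs_neg]
  refine ⟨k, ?_⟩
  rw [hcos]
  have hsin := mul_abs_le_abs_sin hx
  rw [div_mul_eq_mul_div, div_le_iff₀ pi_pos] at hsin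
  linarith

theorem Complex.re_conj_mul (a z : ℂ) :
    (conj a * z).re = ‖a‖ * ‖z‖ * Real.cos (arg z - arg a) := by
  rw [Real.cos_sub, mul_re, conj_re, conj_im, ← norm_mul_cos_arg a, ← norm_mul_sin_arg a,
    ← norm_mul_cos_arg z, ← norm_mul_sin_arg z]
  ring

theorem Complex.abs_cos_arg_sub_le {a z : ℂ} {lam c : ℝ} (ha : a ≠ 0) (hc : 0 < c)
    (hz : c ≤ ‖z‖) (h : |(conj a * z).re| ≤ lam * ‖a‖) :
    |Real.cos (arg z - arg a)| ≤ lam / c := by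
  have ha' : 0 < ‖a‖ := norm_pos_iff.mpr ha
  rw [re_conj_mul, abs_mul, abs_mul, abs_norm, abs_norm, mul_assoc, mul_comm lam,
    mul_le_mul_iff_right₀ ha'] at h
  rw [le_div_iff₀ hc, mul_comm]
  exact (mul_le_mul_of_nonneg_right hz (abs_nonneg _)).trans h

theorem Complex.exists_int_abs_arg_sub_le {a z : ℂ} {lam c : ℝ} (ha : a ≠ 0) (hc : 0 < c)
    (hz : c ≤ ‖z‖) (h : |(conj a * z).re| ≤ lam * ‖a‖) :
    ∃ k : ℤ, |arg z - arg a - π / 2 - k * π| ≤ π / 2 * (lam / c) := by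
  obtain ⟨k, hk⟩ := exists_int_abs_sub_le_mul_abs_cos (arg z - arg a)
  exact ⟨k, hk.trans (by gcongr; exact abs_cos_arg_sub_le ha hc hz h)⟩

theorem args_close_of_small_form_general (f₁ f₂ : ℝ) (hf : ¬(f₁ = 0 ∧ f₂ = 0))
    (lam c : ℝ) (hc : 0 < c) (v w : ℂ)
    (hv : c ≤ ‖v‖) (hw : c ≤ ‖w‖)
    (hfv : |f₁ * v.re + f₂ * v.im| ≤ lam * Real.sqrt (f₁ ^ 2 + f₂ ^ 2))
    (hfw : |f₁ * w.re + f₂ * w.im| ≤ lam * Real.sqrt (f₁ ^ 2 + f₂ ^ 2)) :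
    ∃ m : ℤ, |Complex.arg v - Complex.arg w - m * Real.pi| ≤ Real.pi * lam / c := by
  set a : ℂ := ⟨f₁, f₂⟩
  have ha : a ≠ 0 := fun h => hf ⟨congrArg re h, congrArg im h⟩
  have hform (z : ℂ) : f₁ * z.re + f₂ * z.im = (conj a * z).re := by simp [a]
  have hnorm : √(f₁ ^ 2 + f₂ ^ 2) = ‖a‖ := (norm_eq_sqrt_sq_add_sq a).symm
  rw [hform, hnorm] at hfv hfw
  obtain ⟨kv, hkv⟩ := exists_int_abs_arg_sub_le ha hc hv hfv
  obtain ⟨kw, hkw⟩ := exists_int_abs_arg_sub_le ha hc hw hfw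
  refine ⟨kv - kw, ?_⟩
  calc |arg v - arg w - ((kv - kw : ℤ) : ℝ) * π|
      = |(arg v - arg a - π / 2 - kv * π) - (arg w - arg a - π / 2 - kw * π)| := by
        push_cast; ring_nf
    _ ≤ |arg v - arg a - π / 2 - kv * π| + |arg w - arg a - π / 2 - kw * π| := abs_sub _ _
    _ ≤ π / 2 * (lam / c) + π / 2 * (lam / c) := add_le_add hkv hkw
    _ = π * lam / c := by ring

/-- **Near-kernel vectors of a real form on `ℂ` have aligned arguments**
(Lemma 5.7 of the paper). If `f(v) = f₁·Re v + f₂·Im v` is a nonzero real linear form on `ℂ`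
with norm `‖f‖ = √(f₁² + f₂²)`, and `v, w ∈ ℂ` satisfy `|v|, |w| ≥ c` and
`|f(v)|, |f(w)| ≤ λ·‖f‖`, then the arguments of `v` and `w` agree up to a multiple of `π`
within `πλ/c`. -/
theorem args_close_of_small_form (f₁ f₂ : ℝ) (hf : ¬(f₁ = 0 ∧ f₂ = 0))
    (lam c : ℝ) (hlam : 0 < lam) (hc : 0 < c) (v w : ℂ)
    (hv : c ≤ ‖v‖) (hw : c ≤ ‖w‖)
    (hfv : |f₁ * v.re + f₂ * v.im| ≤ lam * Real.sqrt (f₁ ^ 2 + f₂ ^ 2))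
    (hfw : |f₁ * w.re + f₂ * w.im| ≤ lam * Real.sqrt (f₁ ^ 2 + f₂ ^ 2)) :
    ∃ m : ℤ, |Complex.arg v - Complex.arg w - m * Real.pi| ≤ Real.pi * lam / c :=
  args_close_of_small_form_general f₁ f₂ hf lam c hc v w hv hw hfv hfw
end

section
/- Let F ⊂ ℂ be a subfield of ℂ that is a number field of degree d over ℚ, and let ζ, ρ ∈ F be nonzero. Then there exists a subfield F̃ ⊂ ℂ that is a number field of degree at most 4d² over ℚ such that ζ/|ζ| ∈ F̃ and ρ/|ρ| ∈ F̃. -/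
/-!
The compositum `K` of `F` with its complex conjugate has degree at most `d²`, and for `z ∈ F`
the square of `z / |z|` is `z / z̄ ∈ K`. Adjoining the two square roots `ζ / |ζ|` and `ρ / |ρ|`
to `K` multiplies the degree by at most `4`.
-/

open IntermediateField Polynomial ComplexConjugate

theorem IntermediateField.exists_finrank_le_mul_of_pow_mem {K L : Type*} [Field K] [Field L]
    [Algebra K L] (E : IntermediateField K L) [FiniteDimensional K E] {x : L} {n : ℕ}
    (hn : n ≠ 0) (hx : x ^ n ∈ E) :
    ∃ E' : IntermediateField K L, E ≤ E' ∧ x ∈ E' ∧ FiniteDimensional K E' ∧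
      Module.finrank K E' ≤ n * Module.finrank K E := by
  set p : E[X] := X ^ n - C ⟨x ^ n, hx⟩
  have hpx : aeval x p = 0 := by simp [p]
  have hint : IsIntegral E x := ⟨p, monic_X_pow_sub_C _ hn, hpx⟩
  have hdeg : Module.finrank E E⟮x⟯ ≤ n := by
    rw [adjoin.finrank hint]
    calc (minpoly E x).natDegree ≤ p.natDegree :=
          natDegree_le_of_dvd (minpoly.dvd E x hpx) (X_pow_sub_C_ne_zero (Nat.pos_of_ne_zero hn) _)
      _ = n := natDegree_X_pow_sub_C
  have := adjoin.finiteDimensional hint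
  have : Module.Free E E⟮x⟯ := Module.Free.of_divisionRing E E⟮x⟯
  refine ⟨E⟮x⟯.restrictScalars K, fun y hy ↦ E⟮x⟯.algebraMap_mem ⟨y, hy⟩,
    mem_adjoin_simple_self E x, FiniteDimensional.trans K E E⟮x⟯, ?_⟩
  calc Module.finrank K (E⟮x⟯.restrictScalars K)
      = Module.finrank K E * Module.finrank E E⟮x⟯ :=
        (Module.finrank_mul_finrank K E E⟮x⟯).symm
    _ ≤ n * Module.finrank K E := by rw [mul_comm]; gcongr

theorem IntermediateField.finrank_sup_map_le {K L : Type*} [Field K] [Field L] [Algebra K L]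
    (E : IntermediateField K L) (σ : L →ₐ[K] L) :
    Module.finrank K ↥(E ⊔ E.map σ) ≤ Module.finrank K E ^ 2 := by
  calc Module.finrank K ↥(E ⊔ E.map σ) ≤ Module.finrank K E * Module.finrank K (E.map σ) :=
        finrank_sup_le E (E.map σ)
    _ = Module.finrank K E ^ 2 := by
        rw [← (equivMap E σ).toLinearEquiv.finrank_eq, sq]

theorem Complex.div_norm_sq_eq_div_conj (z : ℂ) : (z / ‖z‖) ^ 2 = z / conj z := by
  rcases eq_or_ne z 0 with rfl | hz
  · simp
  rw [div_pow, ← Complex.ofReal_pow, ← Complex.normSq_eq_norm_sq, ← Complex.mul_conj,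
    sq, mul_div_mul_left _ _ hz]

theorem unit_circle_parts_in_bounded_degree_subfield_general (d : ℕ) (F : Subfield ℂ)
    [FiniteDimensional ℚ F] (hF : Module.finrank ℚ F = d)
    (ζ ρ : ℂ) (hζF : ζ ∈ F) (hρF : ρ ∈ F) :
    ∃ F' : Subfield ℂ, FiniteDimensional ℚ F' ∧ Module.finrank ℚ F' ≤ 4 * d ^ 2 ∧
      ζ / (‖ζ‖ : ℂ) ∈ F' ∧ ρ / (‖ρ‖ : ℂ) ∈ F' := by
  let E : IntermediateField ℚ ℂ :=
    F.toIntermediateField fun q ↦ by simp [SubfieldClass.ratCast_mem]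
  have : FiniteDimensional ℚ E := ‹FiniteDimensional ℚ F›
  let K := E ⊔ E.map (Complex.conjAe.restrictScalars ℚ : ℂ →ₐ[ℚ] ℂ)
  have hK : Module.finrank ℚ K ≤ d ^ 2 := hF ▸ E.finrank_sup_map_le _
  have hsq_mem : ∀ z ∈ F, (z / ‖z‖) ^ 2 ∈ K := fun z hz ↦ by
    rw [Complex.div_norm_sq_eq_div_conj]
    exact div_mem (le_sup_left (a := E) hz) (le_sup_right (a := E) ⟨z, hz, rfl⟩)
  obtain ⟨L₁, hKL₁, hζL₁, _, hL₁⟩ :=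
    K.exists_finrank_le_mul_of_pow_mem two_ne_zero (hsq_mem ζ hζF)
  obtain ⟨L₂, hL₁L₂, hρL₂, hL₂fd, hL₂⟩ :=
    L₁.exists_finrank_le_mul_of_pow_mem two_ne_zero (hKL₁ (hsq_mem ρ hρF))
  refine ⟨L₂.toSubfield, hL₂fd, ?_, hL₁L₂ hζL₁, hρL₂⟩
  calc Module.finrank ℚ L₂ ≤ 2 * (2 * d ^ 2) :=
        hL₂.trans (by gcongr; exact hL₁.trans (by gcongr))
    _ = 4 * d ^ 2 := by ring

/-- **Normalized elements lie in a bounded-degree extension** (Lemma 5.8 of the paper).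
If `F ⊂ ℂ` is a number field of degree `d` embedded in `ℂ` and `ζ, ρ ∈ F` are nonzero, then
there is a subfield `F̃ ⊂ ℂ` which is a number field of degree at most `4d²` containing
`ζ/|ζ|` and `ρ/|ρ|`. -/
theorem unit_circle_parts_in_bounded_degree_subfield (d : ℕ) (F : Subfield ℂ)
    [FiniteDimensional ℚ F] (hF : Module.finrank ℚ F = d)
    (ζ ρ : ℂ) (hζF : ζ ∈ F) (hρF : ρ ∈ F) (hζ : ζ ≠ 0) (hρ : ρ ≠ 0) :
    ∃ F' : Subfield ℂ, FiniteDimensional ℚ F' ∧ Module.finrank ℚ F' ≤ 4 * d ^ 2 ∧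
      ζ / (‖ζ‖ : ℂ) ∈ F' ∧ ρ / (‖ρ‖ : ℂ) ∈ F' :=
  unit_circle_parts_in_bounded_degree_subfield_general d F hF ζ ρ hζF hρF
end

section
/- Let d ≥ 2, let C ⊂ ℝ^d be a closed convex body symmetric with respect to the origin (bounded with nonempty interior), and let Λ < ℝ^d be a full-rank lattice. Let m₁ ≤ m₂ ≤ … ≤ m_d denote the successive minima of C with respect to Λ, i.e. m_i = inf{m > 0 : mC contains i linearly independent vectors of Λ}. Then there exists a ℤ-basis w¹, …, w^d of Λ such that w^i ∈ (3/2)^{i−1}·m_i·C for every i = 1, …, d. -/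
/-!
Take linearly independent lattice vectors `v₁, …, v_d` realizing the successive minima (they are
attained because `Λ` is discrete), so that `‖vᵢ‖_C ≤ mᵢ` for the gauge norm of `C`, and build the
basis inductively. If `w¹, …, wᵏ` is a `ℤ`-basis of `Λ ∩ span(v₁, …, v_k)`, let `φ` be a linear
form vanishing on the `wʲ` with `φ(v_{k+1}) = 1`. Its values on `Λ ∩ span(w¹, …, wᵏ, v_{k+1})`
form a discrete, hence cyclic, subgroup `θℤ` of `ℝ` with `0 < θ ≤ 1`, and a lattice vector with
`φ = θ`, reduced modulo the `wʲ`, has the form `w^{k+1} = ∑ cⱼ wʲ + θ v_{k+1}` with `|cⱼ| ≤ 1/2`.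
It completes the basis, and `‖w^{k+1}‖_C ≤ ∑_{j<k} (1/2) (3/2)^j m_{k+1} + m_{k+1}`, which is
`(3/2)^k m_{k+1}`.
-/

open scoped Pointwise Topology
open Set Submodule

theorem one_add_sum_half_mul_pow_three_halves (k : ℕ) :
    1 + ∑ j : Fin k, 1 / 2 * (3 / 2 : ℝ) ^ (j : ℕ) = (3 / 2) ^ k := by
  induction k with
  | zero => simp
  | succ k ih =>
    rw [Fin.sum_univ_castSucc]
    simp only [Fin.val_castSucc, Fin.val_last]
    rw [← add_assoc, ih, pow_succ]
    ring

theorem sub_smul_mem_span_of_mem_span_insert {K V : Type*} [Ring K] [AddCommGroup V]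
    [Module K V] {φ : V →ₗ[K] K} {v x : V} {s : Set V} (hφv : φ v = 1)
    (hφs : span K s ≤ LinearMap.ker φ) (hx : x ∈ span K (insert v s)) :
    x - φ x • v ∈ span K s := by
  obtain ⟨a, z, hz, rfl⟩ := mem_span_insert.1 hx
  have : φ z = 0 := hφs hz
  simpa [hφv, this] using hz

theorem exists_linearMap_eq_one_of_notMem {K V : Type*} [Field K] [AddCommGroup V] [Module K V]
    {p : Submodule K V} {v : V} (hv : v ∉ p) :
    ∃ φ : V →ₗ[K] K, φ v = 1 ∧ p ≤ LinearMap.ker φ := by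
  obtain ⟨φ, hφv, hφp⟩ := p.exists_dual_map_eq_bot_of_notMem hv inferInstance
  refine ⟨(φ v)⁻¹ • φ, by simp [hφv], fun x hx => ?_⟩
  have : φ x = 0 := LinearMap.le_ker_iff_map.2 hφp hx
  simp [this]

theorem exists_linearIndependent_fin_of_span_eq_top {K V : Type*} [DivisionRing K]
    [AddCommGroup V] [Module K V] [FiniteDimensional K V] {s : Set V} (hs : span K s = ⊤)
    {n : ℕ} (hn : n ≤ Module.finrank K V) :
    ∃ v : Fin n → V, LinearIndependent K v ∧ ∀ j, v j ∈ s := by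
  obtain ⟨ι, b, hbs⟩ : ∃ (ι : Type _) (b : Module.Basis ι K V), range b ⊆ s :=
    ⟨_, Module.Basis.ofSpan hs.ge, Module.Basis.ofSpan_subset hs.ge⟩
  have := Module.Finite.finite_basis b
  have := Fintype.ofFinite ι
  let e := Fintype.equivFinOfCardEq (Module.finrank_eq_card_basis b).symm
  exact ⟨fun j => b (e.symm (Fin.castLE hn j)),
    b.linearIndependent.comp _ (e.symm.injective.comp (Fin.castLE_injective hn)),
    fun j => hbs (mem_range_self _)⟩

theorem exists_linearIndependent_of_forall_linearIndependent {K V : Type*} [DivisionRing K]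
    [AddCommGroup V] [Module K V] {n : ℕ} (u : ∀ i : Fin n, Fin (i + 1) → V)
    (hu : ∀ i, LinearIndependent K (u i)) :
    ∃ v : Fin n → V, LinearIndependent K v ∧ ∀ i, v i ∈ range (u i) := by
  induction n with
  | zero => exact ⟨![], linearIndependent_empty_type, finZeroElim⟩
  | succ n ih =>
    obtain ⟨v, hv, hvu⟩ := ih (fun i => u i.castSucc) (fun i => hu i.castSucc)
    obtain ⟨j, hj⟩ : ∃ j, u (Fin.last n) j ∉ span K (range v) := by
      by_contra! h
      have := FiniteDimensional.span_of_finite K (finite_range v)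
      have hle := Submodule.finrank_mono (span_le.2 (range_subset_iff.2 h))
      rw [finrank_span_eq_card (hu _), Fintype.card_fin, Fin.val_last] at hle
      have hv := finrank_range_le_card (R := K) v
      rw [Set.finrank, Fintype.card_fin] at hv
      omega
    refine ⟨Fin.snoc v (u _ j), linearIndependent_finSnoc.2 ⟨hv, hj⟩, fun i => ?_⟩
    induction i using Fin.lastCases with
    | last => simp
    | cast i => simpa using hvu i

theorem exists_basis_of_span_int_eq {E ι : Type*} [AddCommGroup E] [Fintype ι]
    {Λ : AddSubgroup E} {w : ι → E} (hw : LinearIndependent ℤ w)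
    (hspan : span ℤ (range w) = Λ.toIntSubmodule) :
    ∃ b : Module.Basis ι ℤ Λ, ∀ i, (b i : E) = w i := by
  let wΛ : ι → Λ := fun i => ⟨w i, hspan.le (subset_span (mem_range_self i))⟩
  have hli : LinearIndependent ℤ wΛ := LinearIndependent.of_comp Λ.subtype.toIntLinearMap hw
  refine ⟨Module.Basis.mk hli fun x _ => ?_, fun i => by simp [wΛ]⟩
  obtain ⟨c, hc⟩ := (mem_span_range_iff_exists_fun ℤ).1 (hspan.ge x.2)
  exact (mem_span_range_iff_exists_fun ℤ).2 ⟨c, Subtype.ext (by simpa [wΛ] using hc)⟩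

theorem exists_forall_le_of_finite_sublevel {α β : Type*} [LinearOrder β] {s : Set α}
    (f : α → β) {a : α} (ha : a ∈ s) (hfin : {x ∈ s | f x ≤ f a}.Finite) :
    ∃ x ∈ s, ∀ y ∈ s, f x ≤ f y := by
  obtain ⟨x, ⟨hxs, hxa⟩, hmin⟩ := exists_min_image _ f hfin ⟨a, ha, le_rfl⟩
  refine ⟨x, hxs, fun y hy => ?_⟩
  rcases le_total (f y) (f a) with hya | hay
  · exact hmin y ⟨hy, hya⟩
  · exact hxa.trans hay

section RealVectorSpace

variable {E : Type*} [AddCommGroup E] [Module ℝ E]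

theorem exists_abs_le_half_sub_mem_span_int {ι : Type*} [Fintype ι] {w : ι → E} {y : E}
    (hy : y ∈ span ℝ (range w)) :
    ∃ c : ι → ℝ, (∀ j, |c j| ≤ 1 / 2) ∧ y - ∑ j, c j • w j ∈ span ℤ (range w) := by
  obtain ⟨b, rfl⟩ := (mem_span_range_iff_exists_fun ℝ).1 hy
  refine ⟨fun j => b j - round (b j), fun j => abs_sub_round _, ?_⟩
  have : ∑ j, b j • w j - ∑ j, (b j - round (b j)) • w j = ∑ j, round (b j) • w j := by
    simp only [← Finset.sum_sub_distrib, ← sub_smul, sub_sub_cancel, Int.cast_smul_eq_zsmul]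
  rw [this]
  exact sum_mem fun j _ => zsmul_mem (subset_span (mem_range_self j)) _

theorem exists_sub_mem_span_int_of_mem_span_insert {k : ℕ} {w : Fin k → E} {φ : E →ₗ[ℝ] ℝ}
    {v x : E} (hφv : φ v = 1) (hφw : span ℝ (range w) ≤ LinearMap.ker φ)
    (hx : x ∈ span ℝ (insert v (range w))) :
    ∃ c : Fin k → ℝ, (∀ j, |c j| ≤ 1 / 2) ∧
      x - (∑ j, c j • w j + φ x • v) ∈ span ℤ (range w) := by
  obtain ⟨c, hc, hmem⟩ :=
    exists_abs_le_half_sub_mem_span_int (sub_smul_mem_span_of_mem_span_insert hφv hφw hx)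
  refine ⟨c, hc, ?_⟩
  rwa [sub_add_eq_sub_sub_swap]

theorem span_real_eq_of_span_int_eq {Λ : AddSubgroup E} {ι ι' : Type*} {w : ι → E}
    {v : ι' → E} (hvΛ : ∀ i, v i ∈ Λ)
    (h : span ℤ (range w) = Λ.toIntSubmodule ⊓ (span ℝ (range v)).restrictScalars ℤ) :
    span ℝ (range w) = span ℝ (range v) :=
  le_antisymm (span_le.2 (range_subset_iff.2 fun j => (h.le (subset_span (mem_range_self j))).2))
    (span_le.2 (range_subset_iff.2 fun i =>
      span_le_restrictScalars ℤ ℝ _ (h.ge ⟨hvΛ i, subset_span (mem_range_self i)⟩)))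

theorem Seminorm.apply_sum_smul_add_smul_le (N : Seminorm ℝ E) {k : ℕ} {w : Fin k → E}
    {c : Fin k → ℝ} {θ M : ℝ} {v : E} (hc : ∀ j, |c j| ≤ 1 / 2) (hθ0 : 0 ≤ θ) (hθ1 : θ ≤ 1)
    (hw : ∀ j, N (w j) ≤ (3 / 2) ^ (j : ℕ) * M) (hv : N v ≤ M) :
    N (∑ j, c j • w j + θ • v) ≤ (3 / 2) ^ k * M := by
  calc N (∑ j, c j • w j + θ • v) ≤ ∑ j, N (c j • w j) + N (θ • v) :=
        (map_add_le_add N _ _).trans (add_le_add_left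
          (Finset.le_sum_of_subadditive N (map_zero N).le (map_add_le_add N) _ _) _)
    _ = ∑ j, |c j| * N (w j) + θ * N v := by
        simp only [map_smul_eq_mul, Real.norm_eq_abs, abs_of_nonneg hθ0]
    _ ≤ ∑ j : Fin k, 1 / 2 * ((3 / 2) ^ (j : ℕ) * M) + 1 * M := by
        gcongr with j
        exacts [hc j, hw j]
    _ = (3 / 2) ^ k * M := by
        rw [← one_add_sum_half_mul_pow_three_halves, add_mul, Finset.sum_mul]
        simp only [mul_assoc]
        ring

end RealVectorSpace

section DiscreteSubgroup

variable {E : Type*} [NormedAddCommGroup E] [NormedSpace ℝ E] [FiniteDimensional ℝ E]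

theorem AddSubgroup.finite_inter_of_isBounded (Λ : AddSubgroup E) [DiscreteTopology Λ]
    {s : Set E} (hs : Bornology.IsBounded s) : (s ∩ Λ).Finite :=
  Metric.finite_isBounded_inter_isClosed DiscreteTopology.isDiscrete hs
    AddSubgroup.isClosed_of_discrete

variable {Λ : AddSubgroup E} [DiscreteTopology Λ]

theorem exists_isLeast_pos_mem_map {k : ℕ} {w : Fin k → E} {v : E} {φ : E →ₗ[ℝ] ℝ}
    (hw : span ℤ (range w) ≤ Λ.toIntSubmodule) (hvΛ : v ∈ Λ) (hφv : φ v = 1)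
    (hφw : span ℝ (range w) ≤ LinearMap.ker φ) :
    ∃ θ, IsLeast {g | g ∈ (Λ ⊓ (span ℝ (insert v (range w))).toAddSubgroup).map
      φ.toAddMonoidHom ∧ 0 < g} θ := by
  set G := (Λ ⊓ (span ℝ (insert v (range w))).toAddSubgroup).map φ.toAddMonoidHom
  set K := (fun p : (Fin k → ℝ) × ℝ => ∑ j, p.1 j • w j + p.2 • v) ''
    (univ.pi (fun _ => Icc (-(1 / 2)) (1 / 2)) ×ˢ Icc (-1) 1)
  have hK : Bornology.IsBounded K :=
    (((isCompact_univ_pi fun _ => isCompact_Icc).prod isCompact_Icc).image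
      (by fun_prop)).isBounded
  -- reduction modulo `span ℤ (range w)` moves every lattice point of the span into the box `K`
  have hsub : {g | g ∈ G ∧ 0 < g ∧ g ≤ 1} ⊆ φ '' (K ∩ Λ) := by
    rintro g ⟨hg, hpos, hle⟩
    obtain ⟨x, ⟨hxΛ, hxV⟩, rfl⟩ := AddSubgroup.mem_map.1 hg
    obtain ⟨c, hc, hdiff⟩ := exists_sub_mem_span_int_of_mem_span_insert hφv hφw hxV
    refine ⟨_, ⟨⟨(c, φ x), ⟨fun j _ => abs_le.1 (hc j), abs_le.1 ?_⟩, rfl⟩, ?_⟩, ?_⟩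
    · exact (abs_of_pos hpos).le.trans hle
    · simpa using Λ.sub_mem hxΛ (hw hdiff)
    · have : ∀ j, φ (w j) = 0 := fun j => hφw (subset_span (mem_range_self j))
      simp [this, hφv]
  have hone : (1 : ℝ) ∈ {g | g ∈ G ∧ 0 < g ∧ g ≤ 1} :=
    ⟨AddSubgroup.mem_map.2 ⟨v, ⟨hvΛ, subset_span (mem_insert _ _)⟩, hφv⟩, one_pos, le_rfl⟩
  obtain ⟨θ, ⟨hθG, hθpos, hθ1⟩, hθmin⟩ :=
    exists_min_image _ id (((Λ.finite_inter_of_isBounded hK).image φ).subset hsub) ⟨1, hone⟩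
  refine ⟨θ, ⟨hθG, hθpos⟩, fun g ⟨hg, hpos⟩ => ?_⟩
  by_cases hg1 : g ≤ 1
  · exact hθmin g ⟨hg, hpos, hg1⟩
  · linarith

theorem exists_span_int_insert_eq {k : ℕ} {w : Fin k → E} {v : E}
    (hw : span ℤ (range w) = Λ.toIntSubmodule ⊓ (span ℝ (range w)).restrictScalars ℤ)
    (hvΛ : v ∈ Λ) (hv : v ∉ span ℝ (range w)) :
    ∃ (c : Fin k → ℝ) (θ : ℝ), (∀ j, |c j| ≤ 1 / 2) ∧ 0 < θ ∧ θ ≤ 1 ∧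
      span ℤ (insert (∑ j, c j • w j + θ • v) (range w)) =
        Λ.toIntSubmodule ⊓ (span ℝ (insert v (range w))).restrictScalars ℤ := by
  set V := span ℝ (insert v (range w))
  have hwΛ : span ℤ (range w) ≤ Λ.toIntSubmodule := hw.le.trans inf_le_left
  obtain ⟨φ, hφv, hφw⟩ := exists_linearMap_eq_one_of_notMem hv
  obtain ⟨θ, hθ⟩ := exists_isLeast_pos_mem_map hwΛ hvΛ hφv hφw
  have hG := AddSubgroup.cyclic_of_min hθ
  obtain ⟨⟨x, ⟨hxΛ, hxV⟩, hxθ⟩, hθpos⟩ := hθ.1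
  change φ x = θ at hxθ
  obtain ⟨c, hc, hdiff⟩ := exists_sub_mem_span_int_of_mem_span_insert hφv hφw hxV
  set u := ∑ j, c j • w j + θ • v
  have hφu : φ u = θ := by
    have : ∀ j, φ (w j) = 0 := fun j => hφw (subset_span (mem_range_self j))
    simp [u, this, hφv]
  have huΛ : u ∈ Λ := by simpa [u, hxθ] using Λ.sub_mem hxΛ (hwΛ hdiff)
  have huV : u ∈ V := add_mem (sum_mem fun j _ => smul_mem _ _ (subset_span
    (mem_insert_of_mem _ (mem_range_self j)))) (smul_mem _ _ (subset_span (mem_insert _ _)))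
  have hθ1 : θ ≤ 1 :=
    hθ.2 ⟨AddSubgroup.mem_map.2 ⟨v, ⟨hvΛ, subset_span (mem_insert _ _)⟩, hφv⟩, one_pos⟩
  refine ⟨c, θ, hc, hθpos, hθ1, le_antisymm ?_ ?_⟩
  · rw [span_le]
    rintro y (rfl | ⟨j, rfl⟩)
    · exact ⟨huΛ, huV⟩
    · exact ⟨hwΛ (subset_span (mem_range_self j)),
        subset_span (mem_insert_of_mem _ (mem_range_self j))⟩
  · rintro y ⟨hyΛ, hyV⟩
    have hφy : φ y ∈ AddSubgroup.closure {θ} := hG ▸ AddSubgroup.mem_map.2 ⟨y, ⟨hyΛ, hyV⟩, rfl⟩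
    obtain ⟨n, hn⟩ := AddSubgroup.mem_closure_singleton.1 hφy
    have hrest : y - n • u ∈ span ℤ (range w) := by
      rw [hw]
      refine ⟨Λ.sub_mem hyΛ (Λ.zsmul_mem huΛ n), ?_⟩
      have h := sub_smul_mem_span_of_mem_span_insert hφv hφw
        (V.sub_mem hyV (V.toAddSubgroup.zsmul_mem huV n))
      simpa [hφu, ← hn] using h
    rw [mem_span_insert]
    exact ⟨n, _, hrest, by abel⟩

theorem exists_span_int_eq_of_seminorm_le (N : Seminorm ℝ E) {n : ℕ} (v : Fin n → E)
    (M : Fin n → ℝ) (hv : LinearIndependent ℝ v) (hvΛ : ∀ i, v i ∈ Λ) (hM : Monotone M)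
    (hvM : ∀ i, N (v i) ≤ M i) :
    ∃ w : Fin n → E, LinearIndependent ℝ w ∧ (∀ i, N (w i) ≤ (3 / 2) ^ (i : ℕ) * M i) ∧
      span ℤ (range w) = Λ.toIntSubmodule ⊓ (span ℝ (range v)).restrictScalars ℤ := by
  induction n with
  | zero => exact ⟨![], linearIndependent_empty_type, finZeroElim, by simp⟩
  | succ n ih =>
    obtain ⟨v, x, rfl⟩ : ∃ v' x, v = Fin.snoc v' x :=
      ⟨Fin.init v, v (Fin.last n), (Fin.snoc_init_self v).symm⟩
    obtain ⟨hv, hx⟩ := linearIndependent_finSnoc.1 hv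
    have hxΛ : x ∈ Λ := by simpa using hvΛ (Fin.last n)
    have hvΛ' (i : Fin n) : v i ∈ Λ := by simpa using hvΛ i.castSucc
    obtain ⟨w, hw, hwM, hwv⟩ := ih v (M ∘ Fin.castSucc) hv hvΛ'
      (hM.comp Fin.strictMono_castSucc.monotone) (fun i => by simpa using hvM i.castSucc)
    have hspan := span_real_eq_of_span_int_eq hvΛ' hwv
    obtain ⟨c, θ, hc, hθ0, hθ1, hwu⟩ :=
      exists_span_int_insert_eq (hspan ▸ hwv) hxΛ (hspan ▸ hx)
    refine ⟨Fin.snoc w (∑ j, c j • w j + θ • x), linearIndependent_finSnoc.2 ⟨hw, fun hu => ?_⟩,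
      fun i => ?_, ?_⟩
    · have : θ • x ∈ span ℝ (range w) := (add_mem_cancel_left
        (sum_mem fun j _ => smul_mem _ (c j) (subset_span (mem_range_self j)))).1 hu
      exact hx (hspan ▸ (smul_mem_iff _ hθ0.ne').1 this)
    · induction i using Fin.lastCases with
      | last =>
        simpa using N.apply_sum_smul_add_smul_le hc hθ0.le hθ1 (fun j => (hwM j).trans
          (mul_le_mul_of_nonneg_left (hM (Fin.castSucc_lt_last j).le) (by positivity)))
          (by simpa using hvM (Fin.last n))
      | cast i => simpa using hwM i
    · rw [Fin.range_snoc, hwu, Fin.range_snoc, span_insert, span_insert, hspan]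

end DiscreteSubgroup

section ConvexBody

variable {E : Type*} [NormedAddCommGroup E] [NormedSpace ℝ E] {C : Set E}

theorem Convex.zero_mem_interior_of_neg_mem (hconv : Convex ℝ C) (hsymm : ∀ x ∈ C, -x ∈ C)
    (hint : (interior C).Nonempty) : (0 : E) ∈ interior C := by
  obtain ⟨x, hx⟩ := hint
  simpa using hconv.combo_interior_self_mem_interior hx (hsymm x (interior_subset hx))
    (by norm_num : (0 : ℝ) < 1 / 2) (by norm_num : (0 : ℝ) ≤ 1 / 2) (by norm_num)

theorem mem_smul_iff_gauge_le (hconv : Convex ℝ C) (hclosed : IsClosed C) (h0 : C ∈ 𝓝 0)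
    {t : ℝ} (ht : 0 < t) {x : E} : x ∈ t • C ↔ gauge C x ≤ t := by
  have h := gauge_le_one_iff_mem_closure hconv h0 (x := t⁻¹ • x)
  rw [hclosed.closure_eq] at h
  rw [mem_smul_set_iff_inv_smul_mem₀ ht.ne', ← h, gauge_smul_of_nonneg (inv_nonneg.2 ht.le),
    smul_eq_mul, inv_mul_le_one₀ ht]

theorem isBounded_setOf_gauge_le (habs : Absorbent ℝ C) (hbdd : Bornology.IsBounded C)
    (c : ℝ) : Bornology.IsBounded {x | gauge C x ≤ c} := by
  obtain ⟨r, hr, hCr⟩ := hbdd.subset_closedBall_lt 0 0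
  refine (Metric.isBounded_closedBall (x := (0 : E)) (r := c * r)).subset fun x hx => ?_
  have := le_gauge_of_subset_closedBall habs hr.le hCr (x := x)
  rw [div_le_iff₀ hr] at this
  rw [mem_closedBall_zero_iff]
  exact this.trans (mul_le_mul_of_nonneg_right hx hr.le)

end ConvexBody

section SuccessiveMinima

variable {E : Type*} [NormedAddCommGroup E] [NormedSpace ℝ E]

def successiveMinimaSet (Λ : AddSubgroup E) (C : Set E) (n : ℕ) : Set ℝ :=
  {t | 0 < t ∧ ∃ v : Fin n → E, (∀ j, v j ∈ Λ ∧ v j ∈ t • C) ∧ LinearIndependent ℝ v}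

variable {Λ : AddSubgroup E} {C : Set E}

theorem successiveMinimaSet_anti {n n' : ℕ} (h : n ≤ n') :
    successiveMinimaSet Λ C n' ⊆ successiveMinimaSet Λ C n := by
  rintro t ⟨ht, v, hv, hli⟩
  exact ⟨ht, v ∘ Fin.castLE h, fun j => hv _, hli.comp _ (Fin.castLE_injective h)⟩

theorem isLeast_sInf_successiveMinimaSet [FiniteDimensional ℝ E] [DiscreteTopology Λ]
    (hconv : Convex ℝ C) (hclosed : IsClosed C) (h0 : C ∈ 𝓝 0) (hbdd : Bornology.IsBounded C)
    (hspan : span ℝ (Λ : Set E) = ⊤) {n : ℕ} (hn0 : 0 < n) (hn : n ≤ Module.finrank ℝ E) :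
    IsLeast (successiveMinimaSet Λ C n) (sInf (successiveMinimaSet Λ C n)) := by
  have habs : Absorbent ℝ C := absorbent_nhds_zero h0
  let P := {v : Fin n → E | (∀ j, v j ∈ Λ) ∧ LinearIndependent ℝ v}
  let f : (Fin n → E) → ℝ := fun v =>
    Finset.univ.sup' (Finset.univ_nonempty_iff.2 ⟨⟨0, hn0⟩⟩) fun j => gauge C (v j)
  have hf {t : ℝ} (ht : 0 < t) (v : Fin n → E) : (∀ j, v j ∈ t • C) ↔ f v ≤ t := by
    simp [f, Finset.sup'_le_iff, mem_smul_iff_gauge_le hconv hclosed h0 ht]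
  obtain ⟨v₀, hv₀⟩ : P.Nonempty := by
    obtain ⟨v, hv, hvΛ⟩ := exists_linearIndependent_fin_of_span_eq_top hspan hn
    exact ⟨v, hvΛ, hv⟩
  have hfin : {v ∈ P | f v ≤ f v₀}.Finite := by
    refine (Finite.pi fun _ => Λ.finite_inter_of_isBounded
      (isBounded_setOf_gauge_le habs hbdd (f v₀))).subset ?_
    rintro v ⟨⟨hvΛ, -⟩, hv⟩ j -
    exact ⟨(Finset.sup'_le_iff _ _).1 hv j (Finset.mem_univ _), hvΛ j⟩
  obtain ⟨v, ⟨hvΛ, hv⟩, hmin⟩ := exists_forall_le_of_finite_sublevel f hv₀ hfin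
  have hpos : 0 < f v :=
    ((gauge_pos habs ((NormedSpace.isVonNBounded_iff ℝ).2 hbdd)).2 (hv.ne_zero ⟨0, hn0⟩)).trans_le
      (Finset.le_sup' (fun j => gauge C (v j)) (Finset.mem_univ _))
  have hleast : IsLeast (successiveMinimaSet Λ C n) (f v) :=
    ⟨⟨hpos, v, fun j => ⟨hvΛ j, (hf hpos v).2 le_rfl j⟩, hv⟩, fun t ⟨ht, u, hu, hli⟩ =>
      (hmin u ⟨fun j => (hu j).1, hli⟩).trans ((hf ht u).1 fun j => (hu j).2)⟩
  rw [hleast.csInf_eq]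
  exact hleast

end SuccessiveMinima

theorem basis_of_successive_minima_general (d : ℕ)
    (C : Set (EuclideanSpace ℝ (Fin d)))
    (hCconv : Convex ℝ C) (hCclosed : IsClosed C) (hCsymm : ∀ x ∈ C, -x ∈ C)
    (hCbdd : Bornology.IsBounded C) (hCint : (interior C).Nonempty)
    (Λ : AddSubgroup (EuclideanSpace ℝ (Fin d))) (hdisc : DiscreteTopology Λ)
    (hspan : Submodule.span ℝ (Λ : Set (EuclideanSpace ℝ (Fin d))) = ⊤)
    (m : Fin d → ℝ)
    (hm : ∀ i : Fin d, m i = sInf {t : ℝ | 0 < t ∧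
      ∃ v : Fin (i + 1) → EuclideanSpace ℝ (Fin d),
        (∀ j, v j ∈ Λ ∧ v j ∈ t • C) ∧ LinearIndependent ℝ v}) :
    ∃ b : Module.Basis (Fin d) ℤ Λ, ∀ i : Fin d,
      ((b i : EuclideanSpace ℝ (Fin d)) ∈ ((3 / 2 : ℝ) ^ (i : ℕ) * m i) • C) := by
  have h0 : C ∈ 𝓝 0 :=
    mem_interior_iff_mem_nhds.1 (hCconv.zero_mem_interior_of_neg_mem hCsymm hCint)
  have hmem {t : ℝ} (ht : 0 < t) {x} := mem_smul_iff_gauge_le hCconv hCclosed h0 ht (x := x)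
  have hmin (i : Fin d) : IsLeast (successiveMinimaSet Λ C (i + 1)) (m i) := by
    have hmi : m i = sInf (successiveMinimaSet Λ C (i + 1)) := hm i
    rw [hmi]
    exact isLeast_sInf_successiveMinimaSet hCconv hCclosed h0 hCbdd hspan (Nat.succ_pos _)
      (by simp)
  have hmono : Monotone m := fun i i' h =>
    (hmin i).2 (successiveMinimaSet_anti (by simpa using h) (hmin i').1)
  choose hmpos u hu hul using fun i => (hmin i).1
  obtain ⟨v, hv, hvu⟩ := exists_linearIndependent_of_forall_linearIndependent u hul
  choose jv hjv using hvu
  let N := gaugeSeminorm ((balanced_iff_neg_mem hCconv).2 hCsymm) hCconv (absorbent_nhds_zero h0)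
  obtain ⟨w, hw, hwN, hwspan⟩ := exists_span_int_eq_of_seminorm_le N v m hv
    (fun i => hjv i ▸ (hu i _).1) hmono (fun i => hjv i ▸ (hmem (hmpos i)).1 (hu i _).2)
  rw [hv.span_eq_top_of_card_eq_finrank' (by simp), restrictScalars_top, inf_top_eq] at hwspan
  obtain ⟨b, hb⟩ := exists_basis_of_span_int_eq (hw.restrict_scalars' ℤ) hwspan
  exact ⟨b, fun i => hb i ▸ (hmem (by have := hmpos i; positivity)).2 (hwN i)⟩

/-- **A basis realizing the successive minima up to factors `(3/2)^i`**
(the lemma in the appendix of the paper). Let `C ⊂ ℝ^d` (`d ≥ 2`) be a closed, bounded,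
origin-symmetric convex body and let `Λ` be a full-rank lattice in `ℝ^d`. If
`m₁ ≤ ⋯ ≤ m_d` are the successive minima of `C` with respect to `Λ`, then there is a
`ℤ`-basis `w¹, …, w^d` of `Λ` with `w^i ∈ (3/2)^{i-1}·m_i·C` for all `i`. -/
theorem basis_of_successive_minima (d : ℕ) (hd : 2 ≤ d)
    (C : Set (EuclideanSpace ℝ (Fin d)))
    (hCconv : Convex ℝ C) (hCclosed : IsClosed C) (hCsymm : ∀ x ∈ C, -x ∈ C)
    (hCbdd : Bornology.IsBounded C) (hCint : (interior C).Nonempty)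
    (Λ : AddSubgroup (EuclideanSpace ℝ (Fin d))) (hdisc : DiscreteTopology Λ)
    (hspan : Submodule.span ℝ (Λ : Set (EuclideanSpace ℝ (Fin d))) = ⊤)
    (m : Fin d → ℝ)
    (hm : ∀ i : Fin d, m i = sInf {t : ℝ | 0 < t ∧
      ∃ v : Fin (i + 1) → EuclideanSpace ℝ (Fin d),
        (∀ j, v j ∈ Λ ∧ v j ∈ t • C) ∧ LinearIndependent ℝ v}) :
    ∃ b : Module.Basis (Fin d) ℤ Λ, ∀ i : Fin d,
      ((b i : EuclideanSpace ℝ (Fin d)) ∈ ((3 / 2 : ℝ) ^ (i : ℕ) * m i) • C) :=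
  basis_of_successive_minima_general d C hCconv hCclosed hCsymm hCbdd hCint Λ hdisc hspan m hm
end
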